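/- For all K ≥ 1, C ≥ 0 and δ ≥ 0 there exists B ≥ 0 with the following property: if X is a δ-hyperbolic geodesic metric space and γ, γ' : ℝ → X are (K,C)-quasi-geodesics which are forward asymptotic (for every M there is T such that (γ(s), γ'(t))_{γ(0)} ≥ M whenever s, t ≥ T) and backward asymptotic (for every M there is T such that (γ(−s), γ'(−t))_{γ(0)} ≥ M whenever s, t ≥ T), then every point of the image of γ lies within distance B of the image of γ'. -/

import Mathlib

/-!
A geodesic between two points of a `(K, C)`-quasi-geodesic `γ` stays uniformly close to `γ`
(Morse lemma). If `u` on the geodesic is an almost farthest point, at distance `D` from `γ`, then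
the points of the geodesic at distance `2D` before and after `u` are close to `γ`, and joining them
through `γ` gives a path of length `O(D)` staying `D - O(1)` away from `u`. In a `δ`-hyperbolic
space a chain of `N ≤ 2 ^ n` points far from `u` keeps its endpoints' Gromov product at `u` large
up to a loss of `n δ`, while `u` lies on a geodesic between them; hence `D ≤ O(1) + O(δ log D)`,
which bounds `D`. It follows that `(γ a, γ b)_{γ c}` is bounded for `a ≤ c ≤ b`.

For `p = γ s` and `U` large, asymptoticity makes `(γ (±U), γ' (±U))_p` large, so hyperbolicity
transfers the bound on `(γ (-U), γ U)_p` to `(γ' (-U), γ' U)_p`. Walking along `γ'` from `-U`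
to `U` in unit steps, the products `(γ' (-U), p)` and `(γ' U, p)` seen from the walker are never
both large, the first starts at `0` and grows by at most `K + C` per step, and the second ends at
`0`; so at some step both are small, and then `p` is close to the walker.
-/

open Metric Set Filter Topology

universe u

noncomputable def gridPoint (lo hi : ℝ) (j : ℕ) : ℝ := min (lo + j) hi

theorem gridPoint_zero {lo hi : ℝ} (h : lo ≤ hi) : gridPoint lo hi 0 = lo := by
  simp [gridPoint, h]

theorem gridPoint_ceil (lo hi : ℝ) : gridPoint lo hi ⌈hi - lo⌉₊ = hi :=
  min_eq_right (by linarith [Nat.le_ceil (hi - lo)])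

theorem gridPoint_mem_Icc {lo hi : ℝ} (h : lo ≤ hi) (j : ℕ) : gridPoint lo hi j ∈ Icc lo hi :=
  ⟨le_min (by linarith [j.cast_nonneg (α := ℝ)]) h, min_le_right _ _⟩

theorem abs_gridPoint_sub_gridPoint_succ_le (lo hi : ℝ) (j : ℕ) :
    |gridPoint lo hi j - gridPoint lo hi (j + 1)| ≤ 1 := by
  refine (abs_min_sub_min_le_max _ _ _ _).trans ?_
  simp

theorem dist_gridPoint_succ_le {X : Type*} [MetricSpace X] {f : ℝ → X} {K C lo hi : ℝ}
    (hK : 0 ≤ K) (h : lo ≤ hi)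
    (hf : ∀ s ∈ Icc lo hi, ∀ t ∈ Icc lo hi, dist (f s) (f t) ≤ K * |s - t| + C) (j : ℕ) :
    dist (f (gridPoint lo hi j)) (f (gridPoint lo hi (j + 1))) ≤ K + C := by
  have := hf _ (gridPoint_mem_Icc h j) _ (gridPoint_mem_Icc h (j + 1))
  nlinarith [abs_gridPoint_sub_gridPoint_succ_le lo hi j]

theorem exists_le_add_and_le_of_min_le {a b : ℕ → ℝ} {M ε : ℝ} (hε : 0 ≤ ε) (ha : a 0 ≤ M) :
    ∀ N : ℕ, b N ≤ M → (∀ j ≤ N, min (a j) (b j) ≤ M) → (∀ j < N, a (j + 1) ≤ a j + ε) →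
      ∃ j ≤ N, a j ≤ M + ε ∧ b j ≤ M
  | 0, hb, _, _ => ⟨0, le_rfl, by linarith, hb⟩
  | N + 1, hb, hmin, hstep => by
    by_cases hN : a (N + 1) ≤ M + ε
    · exact ⟨N + 1, le_rfl, hN, hb⟩
    have hbN : b N ≤ M :=
      (min_le_iff.1 (hmin N N.le_succ)).resolve_left (by linarith [hstep N N.lt_succ_self])
    obtain ⟨j, hj, h⟩ := exists_le_add_and_le_of_min_le hε ha N hbN
      (fun j hj => hmin j (by omega)) (fun j hj => hstep j (by omega))
    exact ⟨j, by omega, h⟩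

theorem exists_forall_two_pow_le_imp_le (α β : ℝ) :
    ∃ m : ℕ, ∀ n : ℕ, (2 : ℝ) ^ n ≤ α * n + β → n ≤ m := by
  have h : Tendsto (fun n : ℕ => (α * n + β) / 2 ^ n) atTop (𝓝 0) := by
    have h₁ := (tendsto_pow_const_div_const_pow_of_one_lt 1 one_lt_two).const_mul α
    have h₂ := (tendsto_const_nhds (x := β)).div_atTop
      (tendsto_pow_atTop_atTop_of_one_lt (one_lt_two (α := ℝ)))
    simpa [add_div, mul_div_assoc] using h₁.add h₂
  obtain ⟨m, hm⟩ := eventually_atTop.1 (h.eventually (gt_mem_nhds one_pos))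
  refine ⟨m, fun n hn => ?_⟩
  by_contra hlt
  have := hm n (by omega)
  rw [div_lt_one (by positivity)] at this
  linarith

theorem exists_bound_of_forall_two_pow {A P Q δ : ℝ} (hA : 0 ≤ A) (hP : 0 ≤ P) (hQ : 0 ≤ Q)
    (hδ : 0 ≤ δ) : ∃ D₀, 0 ≤ D₀ ∧ ∀ D, 0 ≤ D →
      (∀ n : ℕ, ⌈P * D + Q⌉₊ ≤ 2 ^ n → D ≤ A + n * δ) → D ≤ D₀ := by
  obtain ⟨m, hm⟩ := exists_forall_two_pow_le_imp_le (2 * P * δ) (2 * (P * A + Q) + 4)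
  refine ⟨A + m * δ, by positivity, fun D hD h => ?_⟩
  set N := ⌈P * D + Q⌉₊
  have hN : N ≤ 2 ^ (Nat.log 2 N + 1) := (Nat.lt_pow_succ_log_self one_lt_two N).le
  have hpow : (2 : ℝ) ^ (Nat.log 2 N + 1) ≤ 2 * N + 2 := by
    rw [pow_succ]
    rcases Nat.eq_zero_or_pos N with h0 | hpos
    · simp [h0]
    · have := Nat.pow_log_le_self 2 hpos.ne'
      have : ((2 ^ Nat.log 2 N : ℕ) : ℝ) ≤ N := by exact_mod_cast this
      push_cast at this
      linarith
  have hD := h _ hN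
  have hNle : (N : ℝ) ≤ P * D + Q + 1 := (Nat.ceil_lt_add_one (by positivity)).le
  have hn := hm (Nat.log 2 N + 1) (by
    have := mul_le_mul_of_nonneg_left hD hP
    push_cast at hpow hD ⊢
    nlinarith)
  have : ((Nat.log 2 N + 1 : ℕ) : ℝ) * δ ≤ m * δ :=
    mul_le_mul_of_nonneg_right (by exact_mod_cast hn) hδ
  linarith

theorem exists_forall_le_add_of_bddAbove {α : Type*} {f : α → ℝ} {s : Set α} (hs : s.Nonempty)
    (hf : BddAbove (f '' s)) {ε : ℝ} (hε : 0 < ε) : ∃ x ∈ s, ∀ y ∈ s, f y ≤ f x + ε := by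
  obtain ⟨_, ⟨x, hx, rfl⟩, hlt⟩ := exists_lt_of_lt_csSup (hs.image f) (sub_lt_self _ hε)
  exact ⟨x, hx, fun y hy => by linarith [le_csSup hf (mem_image_of_mem f hy)]⟩

section

variable {X : Type*} [MetricSpace X]

/-- The Gromov product `(x, y)_w`, with the base point `w` as first argument. -/
noncomputable def gromovProduct (w x y : X) : ℝ := (dist x w + dist y w - dist x y) / 2

def IsGromovHyperbolic (δ : ℝ) (X : Type*) [MetricSpace X] : Prop :=
  ∀ x y z w : X, min (gromovProduct w x z) (gromovProduct w y z) - δ ≤ gromovProduct w x y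

def IsGeodesicSegment (σ : ℝ → X) (L : ℝ) : Prop :=
  ∀ s ∈ Icc (0 : ℝ) L, ∀ t ∈ Icc (0 : ℝ) L, dist (σ s) (σ t) = |s - t|

def IsGeodesicSpace (X : Type*) [MetricSpace X] : Prop :=
  ∀ x y : X, ∃ σ : ℝ → X, σ 0 = x ∧ σ (dist x y) = y ∧ IsGeodesicSegment σ (dist x y)

def IsQuasiGeodesic (K C : ℝ) (γ : ℝ → X) : Prop :=
  ∀ s t : ℝ, |s - t| / K - C ≤ dist (γ s) (γ t) ∧ dist (γ s) (γ t) ≤ K * |s - t| + C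

theorem gromovProduct_comm (w x y : X) : gromovProduct w x y = gromovProduct w y x := by
  unfold gromovProduct; rw [dist_comm x y]; ring

theorem gromovProduct_self_left (x y : X) : gromovProduct x x y = 0 := by
  unfold gromovProduct; rw [dist_self, dist_comm y x]; ring

theorem gromovProduct_nonneg (w x y : X) : 0 ≤ gromovProduct w x y := by
  unfold gromovProduct; linarith [dist_triangle_right x y w]

theorem gromovProduct_le_add_dist (w w' x y : X) :
    gromovProduct w x y ≤ gromovProduct w' x y + dist w w' := by
  unfold gromovProduct; linarith [dist_triangle x w' w, dist_triangle y w' w, dist_comm w w']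

theorem dist_sub_dist_le_gromovProduct (w x y : X) :
    dist x w - dist x y ≤ gromovProduct w x y := by
  unfold gromovProduct; linarith [dist_triangle x y w, dist_comm x y]

theorem sub_half_le_gromovProduct {w x y : X} {R ε : ℝ} (hx : R ≤ dist x w) (hy : R ≤ dist y w)
    (hxy : dist x y ≤ ε) : R - ε / 2 ≤ gromovProduct w x y := by
  unfold gromovProduct; linarith

theorem dist_le_gromovProduct_add (p q y z : X) :
    dist p q ≤ gromovProduct q y p + gromovProduct q z p + gromovProduct p y z := by
  have := gromovProduct_nonneg q y z
  unfold gromovProduct at *; linarith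

theorem gromovProduct_eq_zero_of_dist_add_dist {w x y : X}
    (h : dist x w + dist w y = dist x y) : gromovProduct w x y = 0 := by
  unfold gromovProduct; rw [dist_comm y w]; linarith

namespace IsGromovHyperbolic

variable {δ : ℝ} (hyp : IsGromovHyperbolic δ X)
include hyp

theorem nonneg (x : X) : 0 ≤ δ := by
  have := hyp x x x x
  rw [min_self, gromovProduct_self_left] at this
  linarith

theorem min_sub_le (w x y z : X) :
    min (gromovProduct w x y) (gromovProduct w y z) - δ ≤ gromovProduct w x z := by
  simpa only [gromovProduct_comm w z y] using hyp x z y w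

theorem min_min_sub_le (w x y z v : X) :
    min (gromovProduct w x y) (min (gromovProduct w y z) (gromovProduct w z v)) - 2 * δ ≤
      gromovProduct w x v := by
  have h₁ := hyp.min_sub_le w x y v
  have h₂ := hyp.min_sub_le w y z v
  have hδ := hyp.nonneg w
  set a := gromovProduct w x y
  set m := min (gromovProduct w y z) (gromovProduct w z v)
  have : min a m - δ ≤ min a (gromovProduct w y v) :=
    le_min (by linarith [min_le_left a m]) (by linarith [min_le_right a m])
  linarith

theorem le_gromovProduct_of_chain {w : X} {R ε : ℝ} (hε : 0 ≤ ε) (n : ℕ) {N : ℕ} {x : ℕ → X}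
    (hN : N ≤ 2 ^ n) (hfar : ∀ i ≤ N, R ≤ dist (x i) w)
    (hstep : ∀ i < N, dist (x i) (x (i + 1)) ≤ ε) :
    R - ε / 2 - n * δ ≤ gromovProduct w (x 0) (x N) := by
  induction n generalizing N x with
  | zero =>
    obtain rfl | rfl : N = 0 ∨ N = 1 := by rw [pow_zero] at hN; omega
    · simpa using sub_half_le_gromovProduct (hfar 0 le_rfl) (hfar 0 le_rfl) (by simpa using hε)
    · simpa using sub_half_le_gromovProduct (hfar 0 zero_le_one) (hfar 1 le_rfl) (hstep 0 one_pos)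
  | succ n ih =>
    have hδ := hyp.nonneg w
    set m := min N (2 ^ n)
    have h₁ := ih (N := m) (x := x) (min_le_right _ _)
      (fun i hi => hfar i (hi.trans (min_le_left _ _)))
      (fun i hi => hstep i (hi.trans_le (min_le_left _ _)))
    have h₂ := ih (N := N - m) (x := fun i => x (m + i)) (by rw [pow_succ] at hN; omega)
      (fun i hi => hfar _ (by omega)) (fun i hi => hstep _ (by omega))
    rw [add_zero, show m + (N - m) = N by omega] at h₂
    have := hyp.min_sub_le w (x 0) (x m) (x N)
    push_cast
    linarith [le_min h₁ h₂]

theorem le_gromovProduct_of_forall_le_dist {γ : ℝ → X} {K C R s s' : ℝ} {w : X} {n : ℕ}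
    (hK : 0 ≤ K) (hγ : ∀ s t, dist (γ s) (γ t) ≤ K * |s - t| + C)
    (hfar : ∀ r ∈ uIcc s s', R ≤ dist (γ r) w) (hn : ⌈|s - s'|⌉₊ ≤ 2 ^ n) :
    R - (K + C) / 2 - n * δ ≤ gromovProduct w (γ s) (γ s') := by
  wlog h : s ≤ s' generalizing s s'
  · rw [gromovProduct_comm]
    exact this (by rwa [uIcc_comm]) (by rwa [abs_sub_comm]) (le_of_not_ge h)
  rw [uIcc_of_le h] at hfar
  rw [abs_sub_comm, abs_of_nonneg (sub_nonneg.2 h)] at hn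
  have hC : 0 ≤ C := by simpa using hγ s s
  have := hyp.le_gromovProduct_of_chain (by positivity) n (x := fun j => γ (gridPoint s s' j)) hn
    (fun i _ => hfar _ (gridPoint_mem_Icc h i))
    (fun i _ => dist_gridPoint_succ_le hK h (fun s _ t _ => hγ s t) i)
  rwa [gridPoint_zero h, gridPoint_ceil] at this

end IsGromovHyperbolic

theorem IsQuasiGeodesic.abs_sub_le {K C : ℝ} {γ : ℝ → X} (hγ : IsQuasiGeodesic K C γ)
    (hK : 0 < K) (s t : ℝ) : |s - t| ≤ K * (dist (γ s) (γ t) + C) := by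
  have := (hγ s t).1
  rw [div_sub' hK.ne', div_le_iff₀ hK] at this
  linarith

namespace IsGeodesicSegment

variable {σ : ℝ → X} {L : ℝ} (hσ : IsGeodesicSegment σ L)
include hσ

theorem dist_eq_sub {s t : ℝ} (hs : 0 ≤ s) (hst : s ≤ t) (ht : t ≤ L) :
    dist (σ s) (σ t) = t - s := by
  rw [hσ s ⟨hs, hst.trans ht⟩ t ⟨hs.trans hst, ht⟩, abs_sub_comm, abs_of_nonneg (by linarith)]

theorem gromovProduct_eq_zero {r s t : ℝ} (hr : 0 ≤ r) (hrs : r ≤ s) (hst : s ≤ t) (ht : t ≤ L) :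
    gromovProduct (σ s) (σ r) (σ t) = 0 := by
  apply gromovProduct_eq_zero_of_dist_add_dist
  rw [hσ.dist_eq_sub hr hrs (hst.trans ht), hσ.dist_eq_sub (hr.trans hrs) hst ht,
    hσ.dist_eq_sub hr (hrs.trans hst) ht]
  ring

theorem reverse : IsGeodesicSegment (fun t => σ (L - t)) L := fun s hs t ht => by
  rw [hσ _ ⟨by linarith [hs.2], by linarith [hs.1]⟩ _ ⟨by linarith [ht.2], by linarith [ht.1]⟩,
    abs_sub_comm]
  ring_nf

theorem exists_before_near {u : ℝ} {Q : Set X} (h0 : σ 0 ∈ Q) (hu : u ∈ Icc 0 L)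
    (hmax : ∀ t ∈ Icc 0 L, infDist (σ t) Q ≤ infDist (σ u) Q + 1) :
    ∃ t ∈ Icc 0 u, ∃ q ∈ Q,
      infDist (σ u) Q - 2 + dist (σ t) q ≤ u - t ∧ u - t ≤ 2 * infDist (σ u) Q := by
  set D := infDist (σ u) Q
  by_cases h : 2 * D ≤ u
  · have hD : 0 ≤ D := infDist_nonneg
    obtain ⟨q, hq, hlt⟩ := (infDist_lt_iff ⟨_, h0⟩).1
      ((hmax (u - 2 * D) ⟨by linarith, by linarith [hu.2]⟩).trans_lt (by linarith : D + 1 < D + 2))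
    exact ⟨u - 2 * D, ⟨by linarith, by linarith⟩, q, hq, by linarith, by linarith⟩
  · have : D ≤ dist (σ 0) (σ u) := by rw [dist_comm]; exact infDist_le_dist_of_mem h0
    rw [hσ.dist_eq_sub le_rfl hu.1 hu.2] at this
    exact ⟨0, ⟨le_rfl, hu.1⟩, σ 0, h0, by rw [dist_self, sub_zero]; linarith, by linarith⟩

end IsGeodesicSegment

theorem IsGromovHyperbolic.infDist_le_of_almost_farthest {δ K C a b L u : ℝ} {γ σ : ℝ → X}
    (hyp : IsGromovHyperbolic δ X) (hK : 1 ≤ K) (hγ : IsQuasiGeodesic K C γ) (hab : a ≤ b)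
    (hσ : IsGeodesicSegment σ L) (ha : σ 0 = γ a) (hb : σ L = γ b) (hu : u ∈ Icc 0 L)
    (hmax : ∀ t ∈ Icc 0 L,
      infDist (σ t) (γ '' Icc a b) ≤ infDist (σ u) (γ '' Icc a b) + 1)
    (n : ℕ) (hn : ⌈6 * K * infDist (σ u) (γ '' Icc a b) + K * (4 + C)⌉₊ ≤ 2 ^ n) :
    infDist (σ u) (γ '' Icc a b) ≤ 2 + (K + C) / 2 + 2 * δ + n * δ := by
  set Q := γ '' Icc a b
  set D := infDist (σ u) Q
  have hK0 : 0 < K := by linarith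
  have hC : 0 ≤ C := by simpa using (hγ 0 0).2
  have hnδ : 0 ≤ n * δ := mul_nonneg n.cast_nonneg (hyp.nonneg (σ u))
  obtain ⟨t₁, ht₁, _, ⟨s₁, hs₁, rfl⟩, h₁, h₁'⟩ :=
    hσ.exists_before_near (by rw [ha]; exact mem_image_of_mem γ ⟨le_rfl, hab⟩) hu hmax
  obtain ⟨t₂, ht₂, _, ⟨s₂, hs₂, rfl⟩, h₂, h₂'⟩ :=
    hσ.reverse.exists_before_near (u := L - u) (Q := Q)
      (by rw [sub_zero, hb]; exact mem_image_of_mem γ (right_mem_Icc.2 hab))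
      ⟨by linarith [hu.2], by linarith [hu.1]⟩
    (fun t ht => by simpa using hmax (L - t) ⟨by linarith [ht.2], by linarith [ht.1]⟩)
  simp only [sub_sub_cancel] at h₁ h₂ h₂'
  have hd₁ : dist (σ t₁) (σ u) = u - t₁ := hσ.dist_eq_sub ht₁.1 ht₁.2 hu.2
  have hd₂ : dist (σ u) (σ (L - t₂)) = L - t₂ - u :=
    hσ.dist_eq_sub hu.1 (by linarith [ht₂.2]) (by linarith [ht₂.1])
  have hzero : gromovProduct (σ u) (σ t₁) (σ (L - t₂)) = 0 :=
    hσ.gromovProduct_eq_zero ht₁.1 ht₁.2 (by linarith [ht₂.2]) (by linarith [ht₂.1])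
  have hfar : ∀ r ∈ uIcc s₁ s₂, D ≤ dist (γ r) (σ u) := fun r hr => by
    rw [dist_comm]; exact infDist_le_dist_of_mem (mem_image_of_mem γ (uIcc_subset_Icc hs₁ hs₂ hr))
  have hlen : |s₁ - s₂| ≤ 6 * K * D + K * (4 + C) := by
    have hdist : dist (γ s₁) (γ s₂) ≤ 6 * D + 4 := by
      linarith [dist_triangle4 (γ s₁) (σ t₁) (σ (L - t₂)) (γ s₂), dist_comm (γ s₁) (σ t₁),
        dist_triangle (σ t₁) (σ u) (σ (L - t₂))]
    nlinarith [hγ.abs_sub_le hK0 s₁ s₂]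
  have hmid := hyp.le_gromovProduct_of_forall_le_dist hK0.le (fun s t => (hγ s t).2) hfar
    ((Nat.ceil_mono hlen).trans hn)
  have hleft := dist_sub_dist_le_gromovProduct (σ u) (σ t₁) (γ s₁)
  have hright := dist_sub_dist_le_gromovProduct (σ u) (σ (L - t₂)) (γ s₂)
  have := hyp.min_min_sub_le (σ u) (σ t₁) (γ s₁) (γ s₂) (σ (L - t₂))
  rw [hzero, gromovProduct_comm _ (γ s₂)] at this
  have : D - 2 - (K + C) / 2 - n * δ ≤ min (gromovProduct (σ u) (σ t₁) (γ s₁))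
      (min (gromovProduct (σ u) (γ s₁) (γ s₂)) (gromovProduct (σ u) (σ (L - t₂)) (γ s₂))) :=
    le_min (by linarith) (le_min (by linarith) (by linarith [dist_comm (σ u) (σ (L - t₂))]))
  linarith

/-- The parameters `s j` of points of `γ` near the unit-step samples of `σ` start near `a`, end
near `b` and move by bounded steps, so one of them is near `c`. -/
theorem IsGeodesicSegment.exists_dist_le_of_forall_infDist_le {K C D₀ a b c L : ℝ} {γ σ : ℝ → X}
    (hσ : IsGeodesicSegment σ L) (hL : 0 ≤ L) (hK : 0 < K)
    (hγ : IsQuasiGeodesic K C γ) (ha : σ 0 = γ a) (hb : σ L = γ b) (hac : a ≤ c) (hcb : c ≤ b)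
    (hnear : ∀ t ∈ Icc 0 L, infDist (σ t) (γ '' Icc a b) ≤ D₀) :
    ∃ t ∈ Icc 0 L, dist (γ c) (σ t) ≤ K * (K * (3 * D₀ + 4 + 2 * C)) + C + D₀ + 1 := by
  have hC : 0 ≤ C := by simpa using (hγ 0 0).2
  have hD₀ : 0 ≤ D₀ := infDist_nonneg.trans (hnear 0 ⟨le_rfl, hL⟩)
  have hexists (j : ℕ) : ∃ s, dist (σ (gridPoint 0 L j)) (γ s) < D₀ + 1 := by
    obtain ⟨_, ⟨s, -, rfl⟩, h⟩ :=
      (infDist_lt_iff ⟨γ a, mem_image_of_mem γ (left_mem_Icc.2 (hac.trans hcb))⟩).1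
        ((hnear _ (gridPoint_mem_Icc hL j)).trans_lt (lt_add_one D₀))
    exact ⟨s, h⟩
  choose s hsd using hexists
  have hparam (j : ℕ) (r : ℝ) :
      |s j - r| ≤ K * (D₀ + 1 + dist (σ (gridPoint 0 L j)) (γ r) + C) := by
    have := hγ.abs_sub_le hK (s j) r
    have := dist_triangle (γ (s j)) (σ (gridPoint 0 L j)) (γ r)
    nlinarith [dist_comm (γ (s j)) (σ (gridPoint 0 L j)), hsd j]
  have hstart : s 0 - c ≤ K * (D₀ + 1 + C) := by
    have := hparam 0 a
    rw [gridPoint_zero hL, ha, dist_self, add_zero] at this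
    linarith [le_abs_self (s 0 - a)]
  have hend : c - s ⌈L - 0⌉₊ ≤ K * (D₀ + 1 + C) := by
    have := hparam ⌈L - 0⌉₊ b
    rw [gridPoint_ceil, hb, dist_self, add_zero] at this
    linarith [neg_abs_le (s ⌈L - 0⌉₊ - b)]
  have hstep (j : ℕ) : s (j + 1) - c ≤ s j - c + K * (2 * D₀ + 3 + C) := by
    have := dist_gridPoint_succ_le (C := 0) zero_le_one hL
      (fun s hs t ht => (hσ s hs t ht).le.trans (by simp)) j
    have : dist (σ (gridPoint 0 L (j + 1))) (γ (s j)) ≤ D₀ + 2 := by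
      linarith [dist_triangle (σ (gridPoint 0 L (j + 1))) (σ (gridPoint 0 L j)) (γ (s j)),
        dist_comm (σ (gridPoint 0 L (j + 1))) (σ (gridPoint 0 L j)), hsd j]
    have := mul_le_mul_of_nonneg_left
      (by linarith : D₀ + 1 + dist (σ (gridPoint 0 L (j + 1))) (γ (s j)) + C ≤ 2 * D₀ + 3 + C)
      hK.le
    linarith [le_abs_self (s (j + 1) - s j), hparam (j + 1) (s j)]
  have hmin (j : ℕ) : min (s j - c) (c - s j) ≤ K * (D₀ + 1 + C) := by
    have : 0 ≤ K * (D₀ + 1 + C) := by positivity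
    rcases le_total (s j) c with h | h
    · exact min_le_of_left_le (by linarith)
    · exact min_le_of_right_le (by linarith)
  obtain ⟨j, -, hj₁, hj₂⟩ := exists_le_add_and_le_of_min_le (a := fun j => s j - c)
    (b := fun j => c - s j) (by positivity) hstart _ hend (fun j _ => hmin j) (fun j _ => hstep j)
  have hcs : |c - s j| ≤ K * (3 * D₀ + 4 + 2 * C) := by
    have := mul_le_mul_of_nonneg_left (by linarith : D₀ + 1 + C ≤ 3 * D₀ + 4 + 2 * C) hK.le
    rw [abs_le]; constructor <;> linarith
  refine ⟨gridPoint 0 L j, gridPoint_mem_Icc hL j, ?_⟩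
  linarith [(hγ c (s j)).2, hsd j, dist_triangle (γ c) (γ (s j)) (σ (gridPoint 0 L j)),
    dist_comm (γ (s j)) (σ (gridPoint 0 L j)), mul_le_mul_of_nonneg_left hcs hK.le]

theorem IsGromovHyperbolic.exists_dist_le {δ K C R lo hi : ℝ} {f : ℝ → X}
    (hyp : IsGromovHyperbolic δ X) (hK : 0 ≤ K) (hlohi : lo ≤ hi)
    (hf : ∀ s ∈ Icc lo hi, ∀ t ∈ Icc lo hi, dist (f s) (f t) ≤ K * |s - t| + C)
    (hR : ∀ t ∈ Icc lo hi, gromovProduct (f t) (f lo) (f hi) ≤ R) (p : X) :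
    ∃ t, dist p (f t) ≤ gromovProduct p (f lo) (f hi) + 2 * (R + δ) + K + C := by
  set x := fun j => f (gridPoint lo hi j)
  have hC : 0 ≤ C := by simpa using hf lo (left_mem_Icc.2 hlohi) lo (left_mem_Icc.2 hlohi)
  have hM : 0 ≤ R + δ := add_nonneg
    ((gromovProduct_nonneg _ _ _).trans (hR lo (left_mem_Icc.2 hlohi))) (hyp.nonneg p)
  obtain ⟨j, -, ha, hb⟩ := exists_le_add_and_le_of_min_le
    (a := fun j => gromovProduct (x j) (f lo) p) (b := fun j => gromovProduct (x j) (f hi) p)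
    (M := R + δ) (ε := K + C) (by positivity)
    (by simpa [x, gridPoint_zero hlohi, gromovProduct_self_left] using hM) ⌈hi - lo⌉₊
    (by simpa [x, gridPoint_ceil, gromovProduct_self_left] using hM)
    (fun j _ => by linarith [hyp (f lo) (f hi) p (x j), hR _ (gridPoint_mem_Icc hlohi j)])
    (fun j _ => by
      linarith [gromovProduct_le_add_dist (x (j + 1)) (x j) (f lo) p, dist_comm (x j) (x (j + 1)),
        dist_gridPoint_succ_le hK hlohi hf j])
  exact ⟨gridPoint lo hi j, by linarith [dist_le_gromovProduct_add p (x j) (f lo) (f hi)]⟩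

end

theorem exists_infDist_le_of_isQuasiGeodesic {K C δ : ℝ} (hK : 1 ≤ K) (hC : 0 ≤ C)
    (hδ : 0 ≤ δ) :
    ∃ D₀, 0 ≤ D₀ ∧ ∀ (X : Type u) [MetricSpace X], IsGromovHyperbolic δ X →
      ∀ γ : ℝ → X, IsQuasiGeodesic K C γ → ∀ a b, a ≤ b →
      ∀ (σ : ℝ → X) (L : ℝ), IsGeodesicSegment σ L → σ 0 = γ a → σ L = γ b →
      ∀ t ∈ Icc 0 L, infDist (σ t) (γ '' Icc a b) ≤ D₀ := by
  obtain ⟨D₁, hD₁, hbound⟩ := exists_bound_of_forall_two_pow (A := 2 + (K + C) / 2 + 2 * δ)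
    (P := 6 * K) (Q := K * (4 + C)) (by positivity) (by positivity) (by positivity) hδ
  refine ⟨D₁ + 1, by linarith, fun X _ hyp γ hγ a b hab σ L hσ ha hb t ht => ?_⟩
  have hbdd : BddAbove ((fun t => infDist (σ t) (γ '' Icc a b)) '' Icc 0 L) := by
    refine ⟨L, forall_mem_image.2 fun t ht => ?_⟩
    calc infDist (σ t) (γ '' Icc a b) ≤ dist (σ t) (σ 0) :=
          infDist_le_dist_of_mem (by rw [ha]; exact mem_image_of_mem γ (left_mem_Icc.2 hab))
      _ = t := by rw [dist_comm, hσ.dist_eq_sub le_rfl ht.1 ht.2, sub_zero]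
      _ ≤ L := ht.2
  obtain ⟨u, hu, hmax⟩ := exists_forall_le_add_of_bddAbove ⟨t, ht⟩ hbdd one_pos
  have := hbound _ infDist_nonneg (hyp.infDist_le_of_almost_farthest hK hγ hab hσ ha hb hu hmax)
  linarith [hmax t ht]

theorem exists_gromovProduct_le_of_isQuasiGeodesic {K C δ : ℝ} (hK : 1 ≤ K) (hC : 0 ≤ C)
    (hδ : 0 ≤ δ) :
    ∃ R, 0 ≤ R ∧ ∀ (X : Type u) [MetricSpace X], IsGeodesicSpace X → IsGromovHyperbolic δ X →
      ∀ γ : ℝ → X, IsQuasiGeodesic K C γ → ∀ a c b, a ≤ c → c ≤ b →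
      gromovProduct (γ c) (γ a) (γ b) ≤ R := by
  obtain ⟨D₀, hD₀, hnear⟩ := exists_infDist_le_of_isQuasiGeodesic.{u} hK hC hδ
  refine ⟨K * (K * (3 * D₀ + 4 + 2 * C)) + C + D₀ + 1, by positivity,
    fun X _ hX hyp γ hγ a c b hac hcb => ?_⟩
  obtain ⟨σ, ha, hb, hσ⟩ := hX (γ a) (γ b)
  obtain ⟨t, ht, hdist⟩ := hσ.exists_dist_le_of_forall_infDist_le dist_nonneg (by linarith) hγ
    ha hb hac hcb (hnear X hyp γ hγ a b (hac.trans hcb) σ _ hσ ha hb)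
  have hzero : gromovProduct (σ t) (γ a) (γ b) = 0 := by
    rw [← ha, ← hb]
    exact hσ.gromovProduct_eq_zero le_rfl ht.1 ht.2 le_rfl
  linarith [gromovProduct_le_add_dist (γ c) (σ t) (γ a) (γ b)]

theorem stmt_1 :
    ∀ K C δ : ℝ, 1 ≤ K → 0 ≤ C → 0 ≤ δ →
    ∃ B : ℝ, 0 ≤ B ∧
      ∀ (X : Type) [inst : MetricSpace X],
        -- X is geodesic
        (∀ x y : X, ∃ σ : ℝ → X, σ 0 = x ∧ σ (dist x y) = y ∧
          ∀ s ∈ Set.Icc (0:ℝ) (dist x y), ∀ t ∈ Set.Icc (0:ℝ) (dist x y),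
            dist (σ s) (σ t) = |s - t|) →
        -- X is δ-hyperbolic (four-point Gromov product condition)
        (∀ x y z w : X,
          min ((dist x w + dist z w - dist x z) / 2)
              ((dist y w + dist z w - dist y z) / 2) - δ
            ≤ (dist x w + dist y w - dist x y) / 2) →
        ∀ γ γ' : ℝ → X,
          -- γ is a (K,C)-quasi-geodesic
          (∀ s t : ℝ,
            |s - t| / K - C ≤ dist (γ s) (γ t) ∧ dist (γ s) (γ t) ≤ K * |s - t| + C) →
          -- γ' is a (K,C)-quasi-geodesic
          (∀ s t : ℝ,
            |s - t| / K - C ≤ dist (γ' s) (γ' t) ∧ dist (γ' s) (γ' t) ≤ K * |s - t| + C) →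
          -- forward asymptotic
          (∀ M : ℝ, ∃ T : ℝ, ∀ s t : ℝ, T ≤ s → T ≤ t →
            M ≤ (dist (γ s) (γ 0) + dist (γ' t) (γ 0) - dist (γ s) (γ' t)) / 2) →
          -- backward asymptotic
          (∀ M : ℝ, ∃ T : ℝ, ∀ s t : ℝ, T ≤ s → T ≤ t →
            M ≤ (dist (γ (-s)) (γ 0) + dist (γ' (-t)) (γ 0) - dist (γ (-s)) (γ' (-t))) / 2) →
          -- conclusion: every point of γ lies within B of the image of γ'
          ∀ s : ℝ, ∃ t : ℝ, dist (γ s) (γ' t) ≤ B := by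
  intro K C δ hK hC hδ
  obtain ⟨R, hR0, hR⟩ := exists_gromovProduct_le_of_isQuasiGeodesic hK hC hδ
  refine ⟨3 * R + 4 * δ + K + C, by linarith, ?_⟩
  intro X _ hX hyp γ γ' hγ hγ' hfwd hbwd s
  replace hyp : IsGromovHyperbolic δ X := hyp
  obtain ⟨T₁, hT₁⟩ := hfwd (R + 2 * δ + dist (γ 0) (γ s) + 1)
  obtain ⟨T₂, hT₂⟩ := hbwd (R + 2 * δ + dist (γ 0) (γ s) + 1)
  set U := max (max T₁ T₂) |s|
  have hsU : -U ≤ s ∧ s ≤ U := abs_le.1 (le_max_right _ _)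
  have hT₁U : T₁ ≤ U := (le_max_left _ _).trans (le_max_left _ _)
  have hT₂U : T₂ ≤ U := (le_max_right _ _).trans (le_max_left _ _)
  have hback : R + 2 * δ < gromovProduct (γ s) (γ (-U)) (γ' (-U)) := by
    have : _ ≤ gromovProduct (γ 0) (γ (-U)) (γ' (-U)) := hT₂ U U hT₂U hT₂U
    linarith [gromovProduct_le_add_dist (γ 0) (γ s) (γ (-U)) (γ' (-U))]
  have hfront : R + 2 * δ < gromovProduct (γ s) (γ' U) (γ U) := by
    have : _ ≤ gromovProduct (γ 0) (γ U) (γ' U) := hT₁ U U hT₁U hT₁U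
    linarith [gromovProduct_le_add_dist (γ 0) (γ s) (γ U) (γ' U),
      gromovProduct_comm (γ s) (γ U) (γ' U)]
  have hγ'U : gromovProduct (γ s) (γ' (-U)) (γ' U) ≤ R + 2 * δ := by
    by_contra! h
    have := hyp.min_min_sub_le (γ s) (γ (-U)) (γ' (-U)) (γ' U) (γ U)
    linarith [hR X hX hyp γ hγ (-U) s U hsU.1 hsU.2, lt_min hback (lt_min h hfront)]
  obtain ⟨t, ht⟩ := hyp.exists_dist_le (f := γ') (lo := -U) (hi := U) (by linarith) (by linarith)
    (fun s _ t _ => (hγ' s t).2) (fun t ht => hR X hX hyp γ' hγ' _ _ _ ht.1 ht.2) (γ s)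
  exact ⟨t, by linarith⟩
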